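/- arXiv:math/0504235 — 3 statements merged into one kernel-verified Lean document; each statement's English description precedes it below -/
import Mathlib

section
/- The GNS representation is a well-defined *-representation: for a unital *-algebra A over C and a positive linear functional ω, the quotient H_ω = A / J_ω with inner product ⟨ψ_a, ψ_b⟩ = ω(a*b) is a pre-Hilbert space, and π(a)ψ_b := ψ_{ab} defines a *-homomorphism from A into the adjointable operators on H_ω. -/
/-!
Polarization turns the reality of `ω (a⋆a)` into hermiticity `star (ω (a⋆b)) = ω (b⋆a)`. A
Cauchy–Schwarz argument, which needs no division in `R`, then shows that `ω (a⋆a) = 0` forces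
`ω (b⋆a) = 0` for all `b`: with `w = ω (b⋆a)` and `N = |w|²`, positivity of `ω (v⋆v)` for
`v = N • b - (k w̄) • a` reads `0 ≤ N² (ω (b⋆b) - 2k)` for every `k : R`, so `N = 0`. Hence `J_ω`
is a left ideal contained in the kernel of the form on either side, which makes the form and
left multiplication descend to `A ⧸ J_ω`.
-/

/-- An element of C = R(i) is nonnegative if it equals the image of a
nonnegative element of the ordered ring R. -/
def CNonneg (R C : Type) [CommRing R] [LinearOrder R] [IsStrictOrderedRing R] [CommRing C] [Algebra R C]
    (c : C) : Prop :=
  ∃ x : R, 0 ≤ x ∧ c = algebraMap R C x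

section Hermitian

variable {C A : Type*} [CommRing C] [StarRing C] [Ring A] [Algebra C A] [StarRing A]
  [StarModule C A] (ω : A →ₗ[C] C)

theorem apply_star_smul_add_smul_mul_self (c d : C) (a b : A) :
    ω (star (c • a + d • b) * (c • a + d • b))
      = star c * c * ω (star a * a) + star c * d * ω (star a * b)
        + star d * c * ω (star b * a) + star d * d * ω (star b * b) := by
  simp only [star_add, star_smul, add_mul, mul_add, smul_mul_assoc, mul_smul_comm, map_add,
    map_smul, smul_eq_mul]
  ring

theorem star_apply_star_mul {i : C} (hi2 : i * i = -1) (hsi : star i = -i) (h2 : IsUnit (2 : C))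
    (hsa : ∀ a : A, star (ω (star a * a)) = ω (star a * a)) (a b : A) :
    star (ω (star a * b)) = ω (star b * a) := by
  have hsum := hsa ((1 : C) • a + (1 : C) • b)
  have hrot := hsa ((1 : C) • a + i • b)
  rw [apply_star_smul_add_smul_mul_self] at hsum hrot
  simp only [star_add, star_mul', star_one, hsi, star_neg, hsa] at hsum hrot
  refine h2.mul_left_cancel ?_
  linear_combination hsum + i * hrot + (star (ω (star a * b)) - star (ω (star b * a))
    + ω (star a * b) - ω (star b * a)) * hi2

end Hermitian

theorem CNonneg.star_eq {R C : Type} [CommRing R] [LinearOrder R] [IsStrictOrderedRing R]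
    [CommRing C] [StarRing C] [Algebra R C]
    (hsalg : ∀ x : R, star (algebraMap R C x) = algebraMap R C x) {c : C}
    (hc : CNonneg R C c) : star c = c := by
  obtain ⟨x, -, rfl⟩ := hc
  exact hsalg x

theorem cNonneg_algebraMap_iff {R C : Type} [CommRing R] [LinearOrder R] [IsStrictOrderedRing R]
    [CommRing C] [Algebra R C] (hinj : Function.Injective (algebraMap R C)) {x : R} :
    CNonneg R C (algebraMap R C x) ↔ 0 ≤ x :=
  ⟨fun ⟨_, hy, hxy⟩ => hinj hxy ▸ hy, fun hx => ⟨x, hx, rfl⟩⟩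

theorem nonpos_of_forall_nonneg_mul_sub_two_mul {R : Type*} [CommRing R] [LinearOrder R]
    [IsStrictOrderedRing R] {n m : R} (hm : 0 ≤ m) (h : ∀ k : R, 0 ≤ n * (m - 2 * k)) :
    n ≤ 0 := by
  have := h (m + 1)
  nlinarith

theorem mul_star_eq_algebraMap_mul_self_add_mul_self {R C : Type*} [CommRing R] [CommRing C]
    [StarRing C] [Algebra R C] {i : C} (hi2 : i * i = -1) (hsi : star i = -i)
    (hsalg : ∀ x : R, star (algebraMap R C x) = algebraMap R C x) (p q : R) :
    (algebraMap R C p + i * algebraMap R C q) * star (algebraMap R C p + i * algebraMap R C q)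
      = algebraMap R C (p * p + q * q) := by
  rw [star_add, star_mul', hsi, hsalg, hsalg, map_add, map_mul, map_mul]
  linear_combination (-(algebraMap R C q * algebraMap R C q)) * hi2

section CauchySchwarz

variable {R C : Type} {A : Type*} [CommRing R] [LinearOrder R] [IsStrictOrderedRing R] [CommRing C]
  [StarRing C] [Algebra R C] [Ring A] [Algebra C A] [StarRing A] [StarModule C A]

theorem apply_star_mul_eq_zero_of_apply_star_mul_self_eq_zero {i : C} (hi2 : i * i = -1)
    (hsi : star i = -i) (hsalg : ∀ x : R, star (algebraMap R C x) = algebraMap R C x)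
    (hinj : Function.Injective (algebraMap R C))
    (hdec : ∀ c : C, ∃ x y : R, c = algebraMap R C x + i * algebraMap R C y)
    {ω : A →ₗ[C] C} (hω : ∀ a : A, CNonneg R C (ω (star a * a)))
    (hherm : ∀ a b : A, star (ω (star a * b)) = ω (star b * a))
    {a : A} (ha : ω (star a * a) = 0) (b : A) : ω (star b * a) = 0 := by
  obtain ⟨p, q, hw⟩ := hdec (ω (star b * a))
  obtain ⟨m, hm, hbb⟩ := hω b
  set n := p * p + q * q
  have hnorm : ω (star b * a) * star (ω (star b * a)) = algebraMap R C n := by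
    rw [hw]; exact mul_star_eq_algebraMap_mul_self_add_mul_self hi2 hsi hsalg p q
  have hsq : ∀ k : R, 0 ≤ n * n * (m - 2 * k) := by
    intro k
    have hpos := hω (algebraMap R C n • b + (-(algebraMap R C k * star (ω (star b * a)))) • a)
    rw [apply_star_smul_add_smul_mul_self, ← hherm b a, ha, hbb] at hpos
    rw [← cNonneg_algebraMap_iff hinj]
    convert hpos using 1
    simp only [star_neg, star_mul', star_star, hsalg, map_mul, map_sub, map_ofNat]
    linear_combination (2 * algebraMap R C n * algebraMap R C k) * hnorm
  have hn : n = 0 := mul_self_eq_zero.mp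
    (le_antisymm (nonpos_of_forall_nonneg_mul_sub_two_mul hm hsq) (mul_self_nonneg n))
  obtain ⟨rfl, rfl⟩ := mul_self_add_mul_self_eq_zero.mp hn
  simpa using hw

end CauchySchwarz

section Representation

variable {C A : Type*} [CommRing C] [Ring A] [Algebra C A] (J : Submodule C A)
  (hideal : ∀ a ∈ J, ∀ b : A, b * a ∈ J)

def gnsRep (a : A) : (A ⧸ J) →ₗ[C] (A ⧸ J) :=
  J.mapQ J (LinearMap.mulLeft C a) fun x hx => hideal x hx a

@[simp]
theorem gnsRep_mk (a b : A) :
    gnsRep J hideal a (Submodule.Quotient.mk b) = Submodule.Quotient.mk (a * b) :=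
  rfl

theorem gnsRep_mul (a b : A) :
    gnsRep J hideal (a * b) = (gnsRep J hideal a).comp (gnsRep J hideal b) := by
  ext
  simp [mul_assoc]

theorem gnsRep_add (a b : A) : gnsRep J hideal (a + b) = gnsRep J hideal a + gnsRep J hideal b := by
  ext
  simp [add_mul]

theorem gnsRep_smul (c : C) (a : A) : gnsRep J hideal (c • a) = c • gnsRep J hideal a := by
  ext
  simp

theorem gnsRep_one : gnsRep J hideal 1 = LinearMap.id := by
  ext
  simp

end Representation

section InnerProduct

variable {C : Type} {A : Type*} [CommRing C] [Ring A] [Algebra C A] [StarRing A] {ω : A →ₗ[C] C}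
  {J : Submodule C A}

theorem mul_mem_of_forall_apply_star_mul_eq_zero (hJ : ∀ a : A, a ∈ J ↔ ω (star a * a) = 0)
    (hl : ∀ a ∈ J, ∀ b : A, ω (star a * b) = 0) {a : A} (ha : a ∈ J) (b : A) : b * a ∈ J := by
  rw [hJ, star_mul, mul_assoc]
  exact hl a ha _

variable (ω J) in
def gnsInner (hl : ∀ a ∈ J, ∀ b : A, ω (star a * b) = 0)
    (hr : ∀ a ∈ J, ∀ b : A, ω (star b * a) = 0) (φ ψ : A ⧸ J) : C :=
  Quotient.liftOn₂' φ ψ (fun a b => ω (star a * b)) fun a b a' b' ha hb => by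
    rw [Submodule.quotientRel_def] at ha hb
    calc ω (star a * b) = ω (star a' * b) + ω (star (a - a') * b) := by
          rw [star_sub, sub_mul, map_sub, add_sub_cancel]
      _ = ω (star a' * b') + ω (star a' * (b - b')) := by
          rw [hl _ ha, mul_sub, map_sub, add_zero, add_sub_cancel]
      _ = ω (star a' * b') := by rw [hr _ hb, add_zero]

variable (hl : ∀ a ∈ J, ∀ b : A, ω (star a * b) = 0) (hr : ∀ a ∈ J, ∀ b : A, ω (star b * a) = 0)

@[simp]
theorem gnsInner_mk (a b : A) :
    gnsInner ω J hl hr (Submodule.Quotient.mk a) (Submodule.Quotient.mk b) = ω (star a * b) :=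
  rfl

theorem gnsInner_add_right (φ ψ χ : A ⧸ J) :
    gnsInner ω J hl hr φ (ψ + χ) = gnsInner ω J hl hr φ ψ + gnsInner ω J hl hr φ χ := by
  induction φ using Submodule.Quotient.induction_on
  induction ψ using Submodule.Quotient.induction_on
  induction χ using Submodule.Quotient.induction_on
  simp only [← Submodule.Quotient.mk_add, gnsInner_mk, mul_add, map_add]

theorem gnsInner_smul_right (c : C) (φ ψ : A ⧸ J) :
    gnsInner ω J hl hr φ (c • ψ) = c * gnsInner ω J hl hr φ ψ := by
  induction φ using Submodule.Quotient.induction_on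
  induction ψ using Submodule.Quotient.induction_on
  simp only [← Submodule.Quotient.mk_smul, gnsInner_mk, mul_smul_comm, map_smul, smul_eq_mul]

theorem gnsInner_eq_star [StarRing C] (hherm : ∀ a b : A, star (ω (star a * b)) = ω (star b * a))
    (φ ψ : A ⧸ J) : gnsInner ω J hl hr φ ψ = star (gnsInner ω J hl hr ψ φ) := by
  induction φ using Submodule.Quotient.induction_on
  induction ψ using Submodule.Quotient.induction_on
  simp only [gnsInner_mk, hherm]

theorem cNonneg_gnsInner_self {R : Type} [CommRing R] [LinearOrder R] [IsStrictOrderedRing R]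
    [Algebra R C] (hω : ∀ a : A, CNonneg R C (ω (star a * a))) (φ : A ⧸ J) :
    CNonneg R C (gnsInner ω J hl hr φ φ) := by
  induction φ using Submodule.Quotient.induction_on
  exact hω _

theorem eq_zero_of_gnsInner_self_eq_zero (hJ : ∀ a : A, a ∈ J ↔ ω (star a * a) = 0)
    {φ : A ⧸ J} (hφ : gnsInner ω J hl hr φ φ = 0) : φ = 0 := by
  induction φ using Submodule.Quotient.induction_on
  exact (Submodule.Quotient.mk_eq_zero J).mpr ((hJ _).mpr hφ)

theorem gnsInner_gnsRep_left (hideal : ∀ a ∈ J, ∀ b : A, b * a ∈ J) (a : A) (φ ψ : A ⧸ J) :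
    gnsInner ω J hl hr (gnsRep J hideal a φ) ψ
      = gnsInner ω J hl hr φ (gnsRep J hideal (star a) ψ) := by
  induction φ using Submodule.Quotient.induction_on
  induction ψ using Submodule.Quotient.induction_on
  simp only [gnsRep_mk, gnsInner_mk, star_mul, mul_assoc]

end InnerProduct

/-- The GNS representation is a well-defined *-representation: for a unital
*-algebra A over C = R(i) and a positive linear functional ω with kernel
J_ω = {a : ω(a*a) = 0}, the quotient H_ω = A ⧸ J_ω carries a positive definite
Hermitian inner product with ⟨ψ_a, ψ_b⟩ = ω(a*b), and π(a)ψ_b := ψ_{ab}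
defines a unital *-homomorphism of A into the adjointable operators on H_ω. -/
theorem gns_representation
    (R C A : Type) [CommRing R] [LinearOrder R] [IsStrictOrderedRing R] [CommRing C] [StarRing C]
    [Algebra R C] [Ring A] [Algebra C A] [StarRing A] [StarModule C A]
    -- C = R(i)
    (i : C) (hi2 : i * i = -1) (hsi : star i = -i)
    (hsalg : ∀ x : R, star (algebraMap R C x) = algebraMap R C x)
    (hinj : Function.Injective (algebraMap R C))
    (hdec : ∀ c : C, ∃ x y : R, c = algebraMap R C x + i * algebraMap R C y)
    (h2 : IsUnit (2 : C))
    (ω : A →ₗ[C] C) (hω : ∀ a : A, CNonneg R C (ω (star a * a)))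
    (J : Submodule C A) (hJ : ∀ a : A, a ∈ J ↔ ω (star a * a) = 0) :
    ∃ (inn : (A ⧸ J) → (A ⧸ J) → C) (π : A → (A ⧸ J) →ₗ[C] (A ⧸ J)),
      (∀ a b : A, inn (Submodule.Quotient.mk a) (Submodule.Quotient.mk b)
        = ω (star a * b)) ∧
      -- pre-Hilbert space structure
      (∀ φ ψ χ : A ⧸ J, inn φ (ψ + χ) = inn φ ψ + inn φ χ) ∧
      (∀ (c : C) (φ ψ : A ⧸ J), inn φ (c • ψ) = c * inn φ ψ) ∧
      (∀ φ ψ : A ⧸ J, inn φ ψ = star (inn ψ φ)) ∧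
      (∀ φ : A ⧸ J, CNonneg R C (inn φ φ)) ∧
      (∀ φ : A ⧸ J, inn φ φ = 0 → φ = 0) ∧
      -- π is a unital algebra homomorphism given by left multiplication
      (∀ a b : A, π (a * b) = (π a).comp (π b)) ∧
      (∀ a b : A, π (a + b) = π a + π b) ∧
      (∀ (c : C) (a : A), π (c • a) = c • π a) ∧
      (π 1 = LinearMap.id) ∧
      (∀ a b : A, π a (Submodule.Quotient.mk b) = Submodule.Quotient.mk (a * b)) ∧
      -- π is a *-representation (adjointable action)
      (∀ (a : A) (φ ψ : A ⧸ J), inn (π a φ) ψ = inn φ (π (star a) ψ)) := by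
  have hherm : ∀ a b : A, star (ω (star a * b)) = ω (star b * a) :=
    star_apply_star_mul ω hi2 hsi h2 fun a => (hω a).star_eq hsalg
  have hr : ∀ a ∈ J, ∀ b : A, ω (star b * a) = 0 := fun a ha =>
    apply_star_mul_eq_zero_of_apply_star_mul_self_eq_zero hi2 hsi hsalg hinj hdec hω hherm
      ((hJ a).mp ha)
  have hl : ∀ a ∈ J, ∀ b : A, ω (star a * b) = 0 := fun a ha b => by
    rw [← hherm, hr a ha, star_zero]
  have hideal : ∀ a ∈ J, ∀ b : A, b * a ∈ J := fun a ha =>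
    mul_mem_of_forall_apply_star_mul_eq_zero hJ hl ha
  exact ⟨gnsInner ω J hl hr, gnsRep J hideal, gnsInner_mk hl hr, gnsInner_add_right hl hr,
    gnsInner_smul_right hl hr, gnsInner_eq_star hl hr hherm, cNonneg_gnsInner_self hl hr hω,
    fun _ => eq_zero_of_gnsInner_self_eq_zero hl hr hJ, gnsRep_mul J hideal, gnsRep_add J hideal,
    gnsRep_smul J hideal, gnsRep_one J hideal, gnsRep_mk J hideal, gnsInner_gnsRep_left hl hr hideal⟩
end

section
/- Positivity of the Rieffel-induced inner product from complete positivity: let A, B be unital *-algebras over C, E a (B,A)-bimodule with A-valued inner product ⟨·,·⟩_A such that for all n and all x₁,...,xₙ ∈ E the matrix (⟨x_i, x_j⟩_A) is a positive element of Mₙ(A). Then for any *-representation (H, π) of A on a pre-Hilbert space over C, the sesquilinear form on E ⊗_C H determined by (x⊗φ, y⊗ψ) ↦ ⟨φ, π(⟨x,y⟩_A)ψ⟩ satisfies (Φ, Φ) ≥ 0 for every Φ ∈ E ⊗_C H. -/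
/-- A *-representation of a *-algebra A over C on a pre-Hilbert space over
C = R(i): a C-module H with a positive definite Hermitian inner product and a
C-algebra homomorphism of A into the adjointable operators on H. -/
structure StarRep (R C A : Type) [CommRing R] [LinearOrder R] [IsStrictOrderedRing R] [CommRing C]
    [StarRing C] [Algebra R C] [Ring A] [Algebra C A] [StarRing A] where
  H : Type
  [addCommGroup : AddCommGroup H]
  [module : Module C H]
  inner : H → H → C
  add_right : ∀ φ ψ χ : H, inner φ (ψ + χ) = inner φ ψ + inner φ χ
  smul_right : ∀ (c : C) (φ ψ : H), inner φ (c • ψ) = c * inner φ ψ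
  herm : ∀ φ ψ : H, inner φ ψ = star (inner ψ φ)
  pos : ∀ φ : H, CNonneg R C (inner φ φ)
  definite : ∀ φ : H, inner φ φ = 0 → φ = 0
  π : A →ₐ[C] Module.End C H
  star_prop : ∀ (a : A) (φ ψ : H), inner (π a φ) ψ = inner φ (π (star a) ψ)

attribute [instance] StarRep.addCommGroup StarRep.module

open scoped TensorProduct

/-!
Writing `Φ = ∑ xᵢ ⊗ φᵢ`, the value `(Φ, Φ)` is `Ω(⟨xᵢ, xⱼ⟩_A)` for the vector functional
`Ω(M) = ∑ ⟨φᵢ, π(Mᵢⱼ) φⱼ⟩` of the amplified representation of `Mₙ(A)` on `Hⁿ`. Since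
`Ω(N* N) = ∑ₖ ⟨(Nφ)ₖ, (Nφ)ₖ⟩ ≥ 0`, complete positivity of `⟨·,·⟩_A` gives `(Φ, Φ) ≥ 0`.
The form is well defined on `E ⊗ H` because its kernel `(x, φ, y, ψ) ↦ ⟨φ, π⟨x, y⟩_A ψ⟩` is
Hermitian, hence conjugate-linear in `(x, φ)`.
-/

namespace CNonneg

variable {R C : Type} [CommRing R] [LinearOrder R] [IsStrictOrderedRing R] [CommRing C]
  [Algebra R C]

theorem zero : CNonneg R C 0 := ⟨0, le_rfl, (map_zero _).symm⟩

theorem add {a b : C} : CNonneg R C a → CNonneg R C b → CNonneg R C (a + b) := by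
  rintro ⟨u, hu, rfl⟩ ⟨v, hv, rfl⟩
  exact ⟨u + v, add_nonneg hu hv, (map_add _ _ _).symm⟩

theorem sum {ι : Type} (s : Finset ι) (f : ι → C) (h : ∀ i ∈ s, CNonneg R C (f i)) :
    CNonneg R C (∑ i ∈ s, f i) :=
  Finset.sum_induction f _ (fun _ _ => add) zero h

end CNonneg

namespace TensorProduct

theorem exists_fin_sum_tmul {R M N : Type*} [CommSemiring R] [AddCommMonoid M] [Module R M]
    [AddCommMonoid N] [Module R N] (Φ : M ⊗[R] N) :
    ∃ (n : ℕ) (x : Fin n → M) (φ : Fin n → N), Φ = ∑ i, x i ⊗ₜ φ i := by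
  obtain ⟨S, rfl⟩ := exists_finset Φ
  refine ⟨S.card, fun i => (S.equivFin.symm i).1.1, fun i => (S.equivFin.symm i).1.2, ?_⟩
  rw [← Finset.sum_coe_sort, ← S.equivFin.symm.sum_comp]

variable {C M N : Type} [CommRing C] [StarRing C] [AddCommGroup M] [Module C M]
  [AddCommGroup N] [Module C N]

def sesqOfKernel (f : M → N → M →ₗ[C] N →ₗ[C] C)
    (hf : ∀ m n m' n', f m n m' n' = star (f m' n' m n)) :
    M ⊗[C] N →ₗ⋆[C] M ⊗[C] N →ₗ[C] C :=
  lift <| LinearMap.mk₂'ₛₗ (starRingEnd C) (starRingEnd C) (fun m n => lift (f m n))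
    (fun m₁ m₂ n => ext' fun m' n' => by simp [hf _ _ m'])
    (fun c m n => ext' fun m' n' => by simp [hf _ _ m', starRingEnd_apply])
    (fun m n₁ n₂ => ext' fun m' n' => by simp [hf _ _ m'])
    (fun c m n => ext' fun m' n' => by simp [hf _ _ m', starRingEnd_apply])

theorem sesqOfKernel_tmul (f : M → N → M →ₗ[C] N →ₗ[C] C)
    (hf : ∀ m n m' n', f m n m' n' = star (f m' n' m n)) (m m' : M) (n n' : N) :
    sesqOfKernel f hf (m ⊗ₜ n) (m' ⊗ₜ n') = f m n m' n' := by
  simp [sesqOfKernel]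

theorem sesqOfKernel_sum_tmul {ι : Type} [Fintype ι] (f : M → N → M →ₗ[C] N →ₗ[C] C)
    (hf : ∀ m n m' n', f m n m' n' = star (f m' n' m n)) (x : ι → M) (φ : ι → N) :
    sesqOfKernel f hf (∑ i, x i ⊗ₜ φ i) (∑ j, x j ⊗ₜ φ j) =
      ∑ i, ∑ j, f (x i) (φ i) (x j) (φ j) := by
  simp only [map_sum, LinearMap.sum_apply, sesqOfKernel_tmul]
  exact Finset.sum_comm

end TensorProduct

namespace StarRep

variable {R C A : Type} [CommRing R] [LinearOrder R] [IsStrictOrderedRing R] [CommRing C]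
  [StarRing C] [Algebra R C] [Ring A] [Algebra C A] [StarRing A] (ρ : StarRep R C A)

theorem inner_add_left (φ ψ χ : ρ.H) : ρ.inner (φ + ψ) χ = ρ.inner φ χ + ρ.inner ψ χ := by
  rw [ρ.herm, ρ.add_right, star_add, ← ρ.herm, ← ρ.herm]

theorem inner_smul_left (c : C) (φ ψ : ρ.H) : ρ.inner (c • φ) ψ = star c * ρ.inner φ ψ := by
  rw [ρ.herm, ρ.smul_right, star_mul', ← ρ.herm]

def innerₛₗ : ρ.H →ₗ⋆[C] ρ.H →ₗ[C] C :=
  LinearMap.mk₂'ₛₗ _ _ ρ.inner ρ.inner_add_left ρ.inner_smul_left ρ.add_right ρ.smul_right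

@[simp]
theorem innerₛₗ_apply (φ ψ : ρ.H) : ρ.innerₛₗ φ ψ = ρ.inner φ ψ := rfl

def matrixCoeff (φ : ρ.H) : A →ₗ[C] ρ.H →ₗ[C] C :=
  LinearMap.llcomp C ρ.H ρ.H C (ρ.innerₛₗ φ) ∘ₗ ρ.π.toLinearMap

@[simp]
theorem matrixCoeff_apply (φ : ρ.H) (a : A) (ψ : ρ.H) :
    ρ.matrixCoeff φ a ψ = ρ.inner φ (ρ.π a ψ) := rfl

theorem matrixCoeff_star (φ : ρ.H) (a : A) (ψ : ρ.H) :
    ρ.matrixCoeff φ (star a) ψ = star (ρ.matrixCoeff ψ a φ) := by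
  rw [matrixCoeff_apply, matrixCoeff_apply, ← ρ.star_prop, ρ.herm]

theorem matrixCoeff_star_mul (φ : ρ.H) (a b : A) (ψ : ρ.H) :
    ρ.matrixCoeff φ (star a * b) ψ = ρ.inner (ρ.π a φ) (ρ.π b ψ) := by
  rw [matrixCoeff_apply, map_mul, Module.End.mul_apply, ρ.star_prop]

/-- The vector functional `M ↦ ⟨φ, πₙ(M) φ⟩` of the amplification of `ρ` to `Mₙ(A)` on `Hⁿ`. -/
def vectorFunctional {ι : Type} [Fintype ι] (φ : ι → ρ.H) : Matrix ι ι A →ₗ[C] C where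
  toFun M := ∑ i, ∑ j, ρ.matrixCoeff (φ i) (M i j) (φ j)
  map_add' M N := by simp [Finset.sum_add_distrib]
  map_smul' c M := by simp [Finset.mul_sum]

theorem vectorFunctional_apply {ι : Type} [Fintype ι] (φ : ι → ρ.H) (M : Matrix ι ι A) :
    ρ.vectorFunctional φ M = ∑ i, ∑ j, ρ.matrixCoeff (φ i) (M i j) (φ j) := rfl

theorem vectorFunctional_star_mul {ι : Type} [Fintype ι] (φ : ι → ρ.H) (N M : Matrix ι ι A) :
    ρ.vectorFunctional φ (star N * M) =
      ∑ k, ρ.inner (∑ i, ρ.π (N k i) (φ i)) (∑ j, ρ.π (M k j) (φ j)) := by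
  -- both sides expand to the sum over `i, j, k` of `⟨π (N k i) (φ i), π (M k j) (φ j)⟩`
  simp_rw [← innerₛₗ_apply, map_sum, LinearMap.sum_apply, innerₛₗ_apply, ← matrixCoeff_star_mul]
  simp only [vectorFunctional_apply, Matrix.mul_apply, Matrix.star_apply, map_sum,
    LinearMap.sum_apply]
  rw [Finset.sum_comm_cycle]
  exact Finset.sum_congr rfl fun k _ => Finset.sum_comm

theorem vectorFunctional_star_mul_self_nonneg {ι : Type} [Fintype ι] (φ : ι → ρ.H)
    (N : Matrix ι ι A) : CNonneg R C (ρ.vectorFunctional φ (star N * N)) := by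
  rw [vectorFunctional_star_mul]
  exact CNonneg.sum _ _ fun k _ => ρ.pos _

section Rieffel

variable {E : Type} [AddCommGroup E] [Module C E] (ip : E → E →ₗ[C] A)

def rieffelKernel (x : E) (φ : ρ.H) : E →ₗ[C] ρ.H →ₗ[C] C :=
  ρ.matrixCoeff φ ∘ₗ ip x

theorem rieffelKernel_eq_star (hip : ∀ x y, ip x y = star (ip y x)) (x : E) (φ : ρ.H) (y : E)
    (ψ : ρ.H) : ρ.rieffelKernel ip x φ y ψ = star (ρ.rieffelKernel ip y ψ x φ) := by
  rw [rieffelKernel, LinearMap.comp_apply, hip, matrixCoeff_star]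
  rfl

def rieffelForm (hip : ∀ x y, ip x y = star (ip y x)) : E ⊗[C] ρ.H →ₗ⋆[C] E ⊗[C] ρ.H →ₗ[C] C :=
  TensorProduct.sesqOfKernel (ρ.rieffelKernel ip) (ρ.rieffelKernel_eq_star ip hip)

variable (hip : ∀ x y, ip x y = star (ip y x))

theorem rieffelForm_tmul (x y : E) (φ ψ : ρ.H) :
    ρ.rieffelForm ip hip (x ⊗ₜ φ) (y ⊗ₜ ψ) = ρ.inner φ (ρ.π (ip x y) ψ) :=
  TensorProduct.sesqOfKernel_tmul _ _ x y φ ψ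

theorem rieffelForm_sum_tmul_self {ι : Type} [Fintype ι] (x : ι → E) (φ : ι → ρ.H) :
    ρ.rieffelForm ip hip (∑ i, x i ⊗ₜ φ i) (∑ i, x i ⊗ₜ φ i) =
      ρ.vectorFunctional φ (Matrix.of fun i j => ip (x i) (x j)) :=
  TensorProduct.sesqOfKernel_sum_tmul _ _ x φ

end Rieffel

end StarRep

theorem rieffel_induced_inner_product_positive_general
    (R C A E : Type) [CommRing R] [LinearOrder R] [IsStrictOrderedRing R] [CommRing C] [StarRing C]
    [Algebra R C] [Ring A] [Algebra C A] [StarRing A]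
    [AddCommGroup E] [Module C E]
    -- A-valued inner product on E
    (ipA : E → E → A)
    (ipA_herm : ∀ x y : E, ipA x y = star (ipA y x))
    (ipA_addr : ∀ x y z : E, ipA x (y + z) = ipA x y + ipA x z)
    (ipA_smulr : ∀ (c : C) (x y : E), ipA x (c • y) = c • ipA x y)
    -- complete positivity of the A-valued inner product
    (hcp : ∀ (n : ℕ) (x : Fin n → E) (Ω : Matrix (Fin n) (Fin n) A →ₗ[C] C),
      (∀ N : Matrix (Fin n) (Fin n) A, CNonneg R C (Ω (star N * N))) →
      CNonneg R C (Ω (Matrix.of fun i j => ipA (x i) (x j))))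
    -- a *-representation of A
    (ρ : StarRep R C A) :
    ∃ T : (E ⊗[C] ρ.H) → (E ⊗[C] ρ.H) → C,
      (∀ (x y : E) (φ ψ : ρ.H),
        T (x ⊗ₜ[C] φ) (y ⊗ₜ[C] ψ) = ρ.inner φ (ρ.π (ipA x y) ψ)) ∧
      (∀ Φ Ψ Ξ : E ⊗[C] ρ.H, T Φ (Ψ + Ξ) = T Φ Ψ + T Φ Ξ) ∧
      (∀ Φ Ψ Ξ : E ⊗[C] ρ.H, T (Φ + Ψ) Ξ = T Φ Ξ + T Ψ Ξ) ∧
      (∀ (c : C) (Φ Ψ : E ⊗[C] ρ.H), T Φ (c • Ψ) = c * T Φ Ψ) ∧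
      (∀ (c : C) (Φ Ψ : E ⊗[C] ρ.H), T (c • Φ) Ψ = star c * T Φ Ψ) ∧
      (∀ Φ : E ⊗[C] ρ.H, CNonneg R C (T Φ Φ)) := by
  let ip : E → E →ₗ[C] A := fun x =>
    { toFun := ipA x, map_add' := ipA_addr x, map_smul' := fun c => ipA_smulr c x }
  let T := ρ.rieffelForm ip ipA_herm
  refine ⟨fun Φ Ψ => T Φ Ψ, ρ.rieffelForm_tmul ip ipA_herm, fun Φ => map_add (T Φ),
    LinearMap.map_add₂ T, fun c Φ => map_smul (T Φ) c, LinearMap.map_smulₛₗ₂ T, fun Φ => ?_⟩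
  obtain ⟨n, x, φ, rfl⟩ := TensorProduct.exists_fin_sum_tmul Φ
  change CNonneg R C (T _ _)
  rw [ρ.rieffelForm_sum_tmul_self ip ipA_herm]
  exact hcp n x _ (ρ.vectorFunctional_star_mul_self_nonneg φ)

/-- Positivity of the Rieffel-induced inner product from complete positivity:
let A, B be unital *-algebras over C = R(i) (with 1/n ∈ R for all n ≥ 1) and E
a (B,A)-inner-product bimodule whose A-valued inner product is completely
positive (all matrices (⟨x_i, x_j⟩_A) are positive elements of Mₙ(A)). Then
for any *-representation (H, π) of A, the sesquilinear form on E ⊗_C H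
determined by (x⊗φ, y⊗ψ) ↦ ⟨φ, π(⟨x,y⟩_A)ψ⟩ satisfies (Φ, Φ) ≥ 0 for every
Φ ∈ E ⊗_C H. -/
theorem rieffel_induced_inner_product_positive
    (R C A B E : Type) [CommRing R] [LinearOrder R] [IsStrictOrderedRing R] [CommRing C] [StarRing C]
    [Algebra R C] [Ring A] [Algebra C A] [StarRing A]
    [Ring B] [Algebra C B] [StarRing B]
    [AddCommGroup E] [Module C E] [Module B E]
    (hinv : ∀ k : ℕ, 0 < k → IsUnit (k : R))
    -- right A-action on E
    (ra : E → A → E)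
    (ra_mul : ∀ (x : E) (a b : A), ra (ra x a) b = ra x (a * b))
    (ra_addl : ∀ (x y : E) (a : A), ra (x + y) a = ra x a + ra y a)
    (ra_addr : ∀ (x : E) (a b : A), ra x (a + b) = ra x a + ra x b)
    (ra_smul : ∀ (c : C) (x : E) (a : A), ra (c • x) a = c • ra x a)
    (ra_one : ∀ x : E, ra x 1 = x)
    -- the left B-action commutes with the right A-action
    (hBA : ∀ (b : B) (x : E) (a : A), ra (b • x) a = b • ra x a)
    -- A-valued inner product on E
    (ipA : E → E → A)
    (ipA_herm : ∀ x y : E, ipA x y = star (ipA y x))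
    (ipA_addr : ∀ x y z : E, ipA x (y + z) = ipA x y + ipA x z)
    (ipA_smulr : ∀ (c : C) (x y : E), ipA x (c • y) = c • ipA x y)
    (ipA_ra : ∀ (x y : E) (a : A), ipA x (ra y a) = ipA x y * a)
    -- B acts by adjointable operators
    (ipA_B : ∀ (b : B) (x y : E), ipA (b • x) y = ipA x (star b • y))
    -- complete positivity of the A-valued inner product
    (hcp : ∀ (n : ℕ) (x : Fin n → E) (Ω : Matrix (Fin n) (Fin n) A →ₗ[C] C),
      (∀ N : Matrix (Fin n) (Fin n) A, CNonneg R C (Ω (star N * N))) →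
      CNonneg R C (Ω (Matrix.of fun i j => ipA (x i) (x j))))
    -- a *-representation of A
    (ρ : StarRep R C A) :
    ∃ T : (E ⊗[C] ρ.H) → (E ⊗[C] ρ.H) → C,
      (∀ (x y : E) (φ ψ : ρ.H),
        T (x ⊗ₜ[C] φ) (y ⊗ₜ[C] ψ) = ρ.inner φ (ρ.π (ipA x y) ψ)) ∧
      (∀ Φ Ψ Ξ : E ⊗[C] ρ.H, T Φ (Ψ + Ξ) = T Φ Ψ + T Φ Ξ) ∧
      (∀ Φ Ψ Ξ : E ⊗[C] ρ.H, T (Φ + Ψ) Ξ = T Φ Ξ + T Ψ Ξ) ∧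
      (∀ (c : C) (Φ Ψ : E ⊗[C] ρ.H), T Φ (c • Ψ) = c * T Φ Ψ) ∧
      (∀ (c : C) (Φ Ψ : E ⊗[C] ρ.H), T (c • Φ) Ψ = star c * T Φ Ψ) ∧
      (∀ Φ : E ⊗[C] ρ.H, CNonneg R C (T Φ Φ)) :=
  rieffel_induced_inner_product_positive_general R C A E ipA ipA_herm ipA_addr ipA_smulr hcp ρ
end

section
/- Classical limit of positivity: let A = C∞(M)[[λ]] with a Hermitian star product, assumed to be a positive deformation (every positive linear functional of C∞(M) admits a positive extension order by order). If h ∈ C∞(M)[[λ]] is a positive element of (A, ⋆) (i.e., ω(h) ≥ 0 for all positive ℂ[[λ]]-linear functionals ω), then its classical limit h₀ = h mod λ is a positive element of C∞(M) (i.e., ω₀(h₀) ≥ 0 for all positive linear functionals ω₀ of C∞(M)). -/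
/-- A complex number is nonnegative if it is real and nonnegative. -/
def CxNonneg (z : ℂ) : Prop := 0 ≤ z.re ∧ z.im = 0

/-- An element of ℂ[[λ]] is nonnegative if it lies in ℝ[[λ]] and is zero or has
positive lowest-order nonzero coefficient. -/
def PSCxNonneg (c : PowerSeries ℂ) : Prop :=
  (∀ m : ℕ, (PowerSeries.coeff (R := ℂ) m c).im = 0) ∧
  (c = 0 ∨ ∃ n : ℕ, (∀ m < n, PowerSeries.coeff (R := ℂ) m c = 0) ∧
    0 < (PowerSeries.coeff (R := ℂ) n c).re)

/-- The constant term of a nonnegative formal power series is either zero or the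
(positive) lowest-order coefficient. -/
theorem PSCxNonneg.cxNonneg_constantCoeff {c : PowerSeries ℂ} (hc : PSCxNonneg c) :
    CxNonneg (PowerSeries.constantCoeff c) := by
  obtain ⟨hreal, hzero | ⟨n, hbelow, hlead⟩⟩ := hc
  · simp [hzero, CxNonneg]
  rw [← PowerSeries.coeff_zero_eq_constantCoeff_apply]
  refine ⟨?_, hreal 0⟩
  rcases Nat.eq_zero_or_pos n with rfl | hn
  · exact hlead.le
  · simp [hbelow 0 hn]

theorem classical_limit_of_positivity_general
    (A₀ : Type) [Ring A₀] [Algebra ℂ A₀] [StarRing A₀]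
    (A : Type) [Ring A] [Module (PowerSeries ℂ) A] [StarRing A]
    -- the classical limit map (reduction modulo λ)
    (cl : A →+* A₀)
    -- positive deformation: order-by-order positive extension of positive
    -- classical functionals
    (hposdef : ∀ ω₀ : A₀ →ₗ[ℂ] ℂ, (∀ a : A₀, CxNonneg (ω₀ (star a * a))) →
      ∃ ω : A →ₗ[PowerSeries ℂ] PowerSeries ℂ,
        (∀ a : A, PSCxNonneg (ω (star a * a))) ∧
        (∀ a : A, PowerSeries.constantCoeff (R := ℂ) (ω a) = ω₀ (cl a)))
    -- h is a positive element of the deformed algebra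
    (h : A)
    (hh : ∀ ω : A →ₗ[PowerSeries ℂ] PowerSeries ℂ,
      (∀ a : A, PSCxNonneg (ω (star a * a))) → PSCxNonneg (ω h)) :
    ∀ ω₀ : A₀ →ₗ[ℂ] ℂ, (∀ a : A₀, CxNonneg (ω₀ (star a * a))) →
      CxNonneg (ω₀ (cl h)) := by
  intro ω₀ hω₀
  obtain ⟨ω, hω, hω_lift⟩ := hposdef ω₀ hω₀
  rw [← hω_lift h]
  exact (hh ω hω).cxNonneg_constantCoeff

/-- Classical limit of positivity: let A₀ be a *-algebra over ℂ and A a formal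
deformation of it, i.e. a *-algebra over ℂ[[λ]] together with a classical
limit map cl : A → A₀ ("reduction mod λ") which is a star ring homomorphism,
is ℂ[[λ]]-semilinear over the constant-term map, and is surjective. Assume the
deformation is positive: every positive ℂ-linear functional ω₀ of A₀ extends
to a positive ℂ[[λ]]-linear functional ω of A with constant term ω₀ ∘ cl.
If h ∈ A is a positive element of A (ω(h) ≥ 0 for all positive ℂ[[λ]]-linear
functionals ω), then its classical limit cl h is a positive element of A₀
(ω₀(cl h) ≥ 0 for all positive linear functionals ω₀ of A₀). -/
theorem classical_limit_of_positivity
    (A₀ : Type) [Ring A₀] [Algebra ℂ A₀] [StarRing A₀]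
    (A : Type) [Ring A] [Module (PowerSeries ℂ) A] [StarRing A]
    -- the classical limit map (reduction modulo λ)
    (cl : A →+* A₀)
    (cl_star : ∀ a : A, cl (star a) = star (cl a))
    (cl_smul : ∀ (c : PowerSeries ℂ) (a : A),
      cl (c • a) = PowerSeries.constantCoeff (R := ℂ) c • cl a)
    (cl_surj : Function.Surjective cl)
    -- positive deformation: order-by-order positive extension of positive
    -- classical functionals
    (hposdef : ∀ ω₀ : A₀ →ₗ[ℂ] ℂ, (∀ a : A₀, CxNonneg (ω₀ (star a * a))) →
      ∃ ω : A →ₗ[PowerSeries ℂ] PowerSeries ℂ,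
        (∀ a : A, PSCxNonneg (ω (star a * a))) ∧
        (∀ a : A, PowerSeries.constantCoeff (R := ℂ) (ω a) = ω₀ (cl a)))
    -- h is a positive element of the deformed algebra
    (h : A)
    (hh : ∀ ω : A →ₗ[PowerSeries ℂ] PowerSeries ℂ,
      (∀ a : A, PSCxNonneg (ω (star a * a))) → PSCxNonneg (ω h)) :
    ∀ ω₀ : A₀ →ₗ[ℂ] ℂ, (∀ a : A₀, CxNonneg (ω₀ (star a * a))) →
      CxNonneg (ω₀ (cl h)) :=
  classical_limit_of_positivity_general A₀ A cl hposdef h hh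
end
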